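/- Fix integers n ≥ 1 and 1 ≤ k ≤ n. In ℤ[c_1,…,c_{n+k}], with the conventions c_0 = 1 and c_p = 0 for p < 0 or p > n+k, set h_r = det(c_{1+j−i})_{1≤i,j≤r}. Let J be the ideal generated by the elements h_r for n−k+1 ≤ r ≤ n together with the elements ∑_{p=k+1}^{r} (−1)^p c_p h_{r−p} for n+1 ≤ r ≤ n+k. Then h_r ∈ J for every r with n+1 ≤ r ≤ n+k. -/

import Mathlib

/-! Expanding `h_r` along its first row gives the recursion
`h_r = ∑_{p=1}^{r} (-1)^{p+1} c_p h_{r-p}`, since the minors of the first row are again such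
Toeplitz determinants. Splitting this sum at `p = k` gives
`h_r + ∑_{p=k+1}^{r} (-1)^p c_p h_{r-p} = ∑_{p=1}^{k} (-1)^{p+1} c_p h_{r-p}`, and for
`n + 1 ≤ r ≤ n + k` every `h_{r-p}` on the right is either a generator `h_m` with
`n - k + 1 ≤ m ≤ n` or lies in the ideal by strong induction on `r`. -/

open MvPolynomial

/-- The element `c_p` of `ℤ[c_1,…,c_{n+k}]`, with the conventions `c_0 = 1` and
`c_p = 0` for `p < 0` or `p > n+k`. -/
noncomputable def cGen (n k : ℕ) (p : ℤ) : MvPolynomial (Fin (n + k)) ℤ :=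
  if h : 1 ≤ p ∧ p ≤ n + k then X ⟨p.toNat - 1, by omega⟩
  else if p = 0 then 1 else 0

/-- The `r × r` Schur determinant `h_r = det (c_{1+j-i})_{1 ≤ i,j ≤ r}`. -/
noncomputable def hDet (n k : ℕ) (r : ℕ) : MvPolynomial (Fin (n + k)) ℤ :=
  (Matrix.of fun i j : Fin r => cGen n k (1 + (j : ℤ) - (i : ℤ))).det

/-- The relation `∑_{p=k+1}^{r} (−1)^p c_p h_{r−p}`. -/
noncomputable def cSumRel (n k : ℕ) (r : ℕ) : MvPolynomial (Fin (n + k)) ℤ :=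
  ∑ p ∈ Finset.Icc (k + 1) r,
    (-1 : MvPolynomial (Fin (n + k)) ℤ) ^ p * cGen n k p * hDet n k (r - p)

namespace Matrix

variable {R : Type*} [CommRing R]

noncomputable def toeplitzDet (c : ℤ → R) (r : ℕ) : R :=
  (Matrix.of fun i j : Fin r => c (1 + (j : ℤ) - (i : ℤ))).det

variable {c : ℤ → R}

/-- Deleting the first row and column `j` of the `(m + 1) × (m + 1)` matrix of `toeplitzDet`
leaves a block upper triangular matrix with `j` diagonal entries `c 0 = 1` followed by the
`(m - j) × (m - j)` matrix of `toeplitzDet`. -/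
theorem det_of_succAbove_sub_eq_toeplitzDet (h0 : c 0 = 1) (hneg : ∀ p < 0, c p = 0) (m : ℕ)
    (j : Fin (m + 1)) :
    (Matrix.of fun s t : Fin m => c ((j.succAbove t : ℤ) - s)).det = toeplitzDet c (m - j) := by
  induction m with
  | zero => rw [Nat.zero_sub]; simp [toeplitzDet]
  | succ m ih =>
    induction j using Fin.cases with
    | zero =>
      rw [Fin.val_zero, Nat.sub_zero, toeplitzDet]
      congr 1
      ext s t
      simp only [of_apply, Fin.zero_succAbove, Fin.val_succ]
      push_cast
      ring_nf
    | succ j =>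
      rw [det_succ_column_zero, Finset.sum_eq_single 0]
      · have hminor : (Matrix.of fun s t : Fin (m + 1) =>
            c ((j.succ.succAbove t : ℤ) - s)).submatrix (Fin.succAbove 0) Fin.succ =
            Matrix.of fun s t : Fin m => c ((j.succAbove t : ℤ) - s) := by
          ext s t
          simp only [submatrix_apply, of_apply, Fin.succAbove_zero, Fin.succ_succAbove_succ,
            Fin.val_succ]
          push_cast
          ring_nf
        rw [hminor, ih j]
        simp [h0]
      · intro s _ hs
        rw [of_apply, Fin.succ_succAbove_zero, hneg _ (by simp [Fin.pos_iff_ne_zero.2 hs]),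
          mul_zero, zero_mul]
      · simp

theorem toeplitzDet_succ (h0 : c 0 = 1) (hneg : ∀ p < 0, c p = 0) (r : ℕ) :
    toeplitzDet c (r + 1) =
      ∑ p ∈ Finset.Icc 1 (r + 1), (-1) ^ (p + 1) * c p * toeplitzDet c (r + 1 - p) := by
  calc toeplitzDet c (r + 1)
      = ∑ j : Fin (r + 1), (-1) ^ (j : ℕ) * c (j + 1) * toeplitzDet c (r - j) := by
        rw [toeplitzDet, det_succ_row_zero]
        refine Finset.sum_congr rfl fun j _ => ?_
        rw [← det_of_succAbove_sub_eq_toeplitzDet h0 hneg]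
        congr 2
        · simp [add_comm]
        · ext s t
          simp only [submatrix_apply, of_apply, Fin.val_succ]
          push_cast
          ring_nf
    _ = ∑ j ∈ Finset.range (r + 1), (-1) ^ j * c (j + 1) * toeplitzDet c (r - j) :=
        Fin.sum_univ_eq_sum_range (fun j => (-1) ^ j * c (j + 1) * toeplitzDet c (r - j)) _
    _ = _ := by
        rw [← Finset.Ico_add_one_right_eq_Icc, Finset.sum_Ico_eq_sum_range]
        refine Finset.sum_congr (by simp) fun j _ => ?_
        rw [add_comm 1 j, Nat.add_sub_add_right]
        push_cast
        ring

end Matrix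

theorem cGen_zero (n k : ℕ) : cGen n k 0 = 1 := by
  simp [cGen]

theorem cGen_of_neg (n k : ℕ) {p : ℤ} (hp : p < 0) : cGen n k p = 0 := by
  rw [cGen, dif_neg (by omega), if_neg hp.ne]

theorem hDet_eq_toeplitzDet (n k r : ℕ) : hDet n k r = Matrix.toeplitzDet (cGen n k) r := rfl

theorem hDet_add_cSumRel (n k : ℕ) {r : ℕ} (hr : 0 < r) (hkr : k ≤ r) :
    hDet n k r + cSumRel n k r =
      ∑ p ∈ Finset.Icc 1 k, (-1) ^ (p + 1) * cGen n k p * hDet n k (r - p) := by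
  obtain ⟨r, rfl⟩ := Nat.exists_eq_add_one_of_ne_zero hr.ne'
  simp only [hDet_eq_toeplitzDet, cSumRel]
  have hIcc (m : ℕ) : Finset.Icc 1 m = Finset.Ioc 0 m := Finset.Icc_add_one_left_eq_Ioc 0 m
  rw [Matrix.toeplitzDet_succ (cGen_zero n k) fun _ => cGen_of_neg n k,
    Finset.Icc_add_one_left_eq_Ioc, hIcc, hIcc,
    ← Finset.sum_Ioc_consecutive _ (Nat.zero_le k) hkr, add_assoc, ← Finset.sum_add_distrib]
  simp [pow_succ]

theorem hDet_mem_ideal_general (n k : ℕ) (hk₂ : k ≤ n)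
    (r : ℕ) (hr₁ : n + 1 ≤ r) (hr₂ : r ≤ n + k) :
    hDet n k r ∈ Ideal.span
      (hDet n k '' Set.Icc (n - k + 1) n ∪ cSumRel n k '' Set.Icc (n + 1) (n + k)) := by
  induction r using Nat.strong_induction_on with
  | _ r ih =>
  set J := Ideal.span
    (hDet n k '' Set.Icc (n - k + 1) n ∪ cSumRel n k '' Set.Icc (n + 1) (n + k))
  have hrel : cSumRel n k r ∈ J := Ideal.subset_span (Or.inr ⟨r, ⟨hr₁, hr₂⟩, rfl⟩)
  have hlower : ∀ p ∈ Finset.Icc 1 k, hDet n k (r - p) ∈ J := by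
    intro p hp
    rw [Finset.mem_Icc] at hp
    by_cases hle : r - p ≤ n
    · exact Ideal.subset_span (Or.inl ⟨r - p, ⟨by omega, hle⟩, rfl⟩)
    · exact ih (r - p) (by omega) (by omega) (by omega)
  rw [← add_sub_cancel_right (hDet n k r) (cSumRel n k r),
    hDet_add_cSumRel n k (by omega) (by omega)]
  exact sub_mem (Ideal.sum_mem _ fun p hp => Ideal.mul_mem_left _ _ (hlower p hp)) hrel

/-- With `J = (h_{n−k+1},…,h_n, ∑_{p=k+1}^{r}(−1)^p c_p h_{r−p} (n+1 ≤ r ≤ n+k))`,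
one has `h_r ∈ J` for all `n+1 ≤ r ≤ n+k`. -/
theorem hDet_mem_ideal (n k : ℕ) (hn : 1 ≤ n) (hk₁ : 1 ≤ k) (hk₂ : k ≤ n)
    (r : ℕ) (hr₁ : n + 1 ≤ r) (hr₂ : r ≤ n + k) :
    hDet n k r ∈ Ideal.span
      (hDet n k '' Set.Icc (n - k + 1) n ∪ cSumRel n k '' Set.Icc (n + 1) (n + k)) :=
  hDet_mem_ideal_general n k hk₂ r hr₁ hr₂
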